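/- Let e₁, …, e_n be independent centered random variables with |e_i| ≤ b/2, n = 2^J with J a power of 2. Define A as the event that for all ℓ ∈ [-1, J - log₂ J] and all k ∈ [0, 2^{J - log₂ J - ℓ} - 1], |Σ_{i=0}^{J·2^{ℓ-1}-1} e_{k·2^ℓ·J + i + 1}| ≤ b·J·2^{ℓ/2}·√((ln 2)/2). Then P(A) ≥ 1 - 4/log₂ n + 1/n. -/

import Mathlib

open MeasureTheory ProbabilityTheory

section Auxiliary

lemma my_hoeffding_mgf {Ω : Type*} [MeasurableSpace Ω] {μ : Measure Ω} [IsProbabilityMeasure μ]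
    {X : Ω → ℝ} {c : ℝ} (hXm : Measurable X) (hc : 0 < c)
    (hX0 : ∫ ω, X ω ∂μ = 0) (hXb : ∀ᵐ ω ∂μ, |X ω| ≤ c) (t : ℝ) :
    mgf X μ t ≤ Real.exp (t ^ 2 * c ^ 2 / 2) := by
  have hXint : Integrable X μ := by
    refine Integrable.mono' (integrable_const c) hXm.aestronglyMeasurable ?_
    filter_upwards [hXb] with ω hω
    simpa [Real.norm_eq_abs] using hω
  have hEint : Integrable (fun ω => Real.exp (t * X ω)) μ := by
    refine Integrable.mono' (integrable_const (Real.exp (|t| * c)))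
      ((hXm.const_mul t).exp).aestronglyMeasurable ?_
    filter_upwards [hXb] with ω hω
    rw [Real.norm_eq_abs, abs_of_pos (Real.exp_pos _), Real.exp_le_exp]
    calc t * X ω ≤ |t * X ω| := le_abs_self _
      _ = |t| * |X ω| := abs_mul _ _
      _ ≤ |t| * c := by gcongr
  have key : ∀ᵐ ω ∂μ, Real.exp (t * X ω)
      ≤ Real.cosh (t * c) + (Real.sinh (t * c) / c) * X ω := by
    filter_upwards [hXb] with ω hω
    obtain ⟨h1, h2⟩ := abs_le.mp hω
    set a : ℝ := (c + X ω) / (2 * c) with ha_def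
    set b : ℝ := (c - X ω) / (2 * c) with hb_def
    have ha : 0 ≤ a := by
      apply div_nonneg; linarith; linarith
    have hb : 0 ≤ b := by
      apply div_nonneg; linarith; linarith
    have hab : a + b = 1 := by rw [ha_def, hb_def]; field_simp; ring
    have hconv := convexOn_exp.2 (Set.mem_univ (t * c)) (Set.mem_univ (-(t * c))) ha hb hab
    have hxeq : a • (t * c) + b • (-(t * c)) = t * X ω := by
      simp only [smul_eq_mul, ha_def, hb_def]
      field_simp
      ring
    rw [hxeq] at hconv
    refine hconv.trans_eq ?_
    simp only [smul_eq_mul, Real.cosh_eq, Real.sinh_eq, ha_def, hb_def]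
    field_simp
    ring
  calc mgf X μ t = ∫ ω, Real.exp (t * X ω) ∂μ := rfl
    _ ≤ ∫ ω, (Real.cosh (t * c) + (Real.sinh (t * c) / c) * X ω) ∂μ := by
        exact integral_mono_ae hEint ((integrable_const _).add (hXint.const_mul _)) key
    _ = Real.cosh (t * c) + (Real.sinh (t * c) / c) * ∫ ω, X ω ∂μ := by
        rw [integral_add (integrable_const _) (hXint.const_mul _), integral_const,
          integral_const_mul, probReal_univ]
        simp
    _ = Real.cosh (t * c) := by rw [hX0]; ring
    _ ≤ Real.exp ((t * c) ^ 2 / 2) := Real.cosh_le_exp_half_sq _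
    _ = Real.exp (t ^ 2 * c ^ 2 / 2) := by ring_nf

lemma my_block_tail {Ω : Type*} [MeasurableSpace Ω] {μ : Measure Ω} [IsProbabilityMeasure μ]
    (e : ℕ → Ω → ℝ) (hmeas : ∀ i, Measurable (e i))
    (hindep : iIndepFun e μ)
    (hcentered : ∀ i, ∫ ω, e i ω ∂μ = 0)
    {c : ℝ} (hc : 0 < c) (hbound : ∀ i, ∀ᵐ ω ∂μ, |e i ω| ≤ c)
    (F : Finset ℕ) (hF : 0 < F.card) {ε : ℝ} (hε : 0 < ε) :
    μ {ω | ¬ |∑ j ∈ F, e j ω| ≤ ε}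
      ≤ ENNReal.ofReal (2 * Real.exp (-ε ^ 2 / (2 * F.card * c ^ 2))) := by
  set m : ℝ := (F.card : ℝ) with hm
  have hm0 : 0 < m := by rw [hm]; exact_mod_cast hF
  set t : ℝ := ε / (m * c ^ 2) with ht_def
  have ht : 0 < t := by positivity
  -- integrability of exp(u * e i)
  have h_int : ∀ (u : ℝ) (i : ℕ), Integrable (fun ω => Real.exp (u * e i ω)) μ := by
    intro u i
    refine Integrable.mono' (integrable_const (Real.exp (|u| * c)))
      (((hmeas i).const_mul u).exp).aestronglyMeasurable ?_
    filter_upwards [hbound i] with ω hω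
    rw [Real.norm_eq_abs, abs_of_pos (Real.exp_pos _), Real.exp_le_exp]
    calc u * e i ω ≤ |u * e i ω| := le_abs_self _
      _ = |u| * |e i ω| := abs_mul _ _
      _ ≤ |u| * c := by gcongr
  have hS_int : ∀ u : ℝ, Integrable (fun ω => Real.exp (u * (∑ i ∈ F, e i) ω)) μ :=
    fun u => hindep.integrable_exp_mul_sum hmeas (fun i _ => h_int u i)
  -- mgf bound for the sum
  have hmgf : ∀ u : ℝ, mgf (∑ i ∈ F, e i) μ u ≤ Real.exp (m * (u ^ 2 * c ^ 2 / 2)) := by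
    intro u
    rw [hindep.mgf_sum hmeas F]
    calc ∏ i ∈ F, mgf (e i) μ u ≤ ∏ i ∈ F, Real.exp (u ^ 2 * c ^ 2 / 2) := by
          refine Finset.prod_le_prod (fun i _ => mgf_nonneg) (fun i _ => ?_)
          exact my_hoeffding_mgf (hmeas i) hc (hcentered i) (hbound i) u
      _ = Real.exp (m * (u ^ 2 * c ^ 2 / 2)) := by
          rw [Finset.prod_const, ← Real.exp_nat_mul, hm]
  have hexp_eq : -t * ε + m * (t ^ 2 * c ^ 2 / 2) = -ε ^ 2 / (2 * m * c ^ 2) := by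
    rw [ht_def]; field_simp; ring
  have hup : (μ {ω | ε ≤ (∑ i ∈ F, e i) ω}).toReal
      ≤ Real.exp (-ε ^ 2 / (2 * m * c ^ 2)) := by
    calc (μ {ω | ε ≤ (∑ i ∈ F, e i) ω}).toReal
        ≤ Real.exp (-t * ε) * mgf (∑ i ∈ F, e i) μ t :=
          measure_ge_le_exp_mul_mgf ε ht.le (hS_int t)
      _ ≤ Real.exp (-t * ε) * Real.exp (m * (t ^ 2 * c ^ 2 / 2)) := by
          gcongr; exact hmgf t
      _ = Real.exp (-ε ^ 2 / (2 * m * c ^ 2)) := by rw [← Real.exp_add, hexp_eq]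
  have hlo : (μ {ω | (∑ i ∈ F, e i) ω ≤ -ε}).toReal
      ≤ Real.exp (-ε ^ 2 / (2 * m * c ^ 2)) := by
    calc (μ {ω | (∑ i ∈ F, e i) ω ≤ -ε}).toReal
        ≤ Real.exp (-(-t) * (-ε)) * mgf (∑ i ∈ F, e i) μ (-t) :=
          measure_le_le_exp_mul_mgf (-ε) (by linarith) (hS_int (-t))
      _ ≤ Real.exp (-t * ε) * Real.exp (m * (t ^ 2 * c ^ 2 / 2)) := by
          rw [show -(-t) * (-ε) = -t * ε by ring]
          gcongr
          refine (hmgf (-t)).trans_eq (by ring_nf)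
      _ = Real.exp (-ε ^ 2 / (2 * m * c ^ 2)) := by rw [← Real.exp_add, hexp_eq]
  -- combine
  have hsub : {ω | ¬ |∑ j ∈ F, e j ω| ≤ ε}
      ⊆ {ω | ε ≤ (∑ i ∈ F, e i) ω} ∪ {ω | (∑ i ∈ F, e i) ω ≤ -ε} := by
    intro ω hω
    simp only [Set.mem_setOf_eq, not_le] at hω
    simp only [Set.mem_union, Set.mem_setOf_eq, Finset.sum_apply]
    rcases lt_abs.mp hω with h | h
    · left; linarith
    · right; linarith
  have hconv : ∀ (B : Set Ω) (r : ℝ), (μ B).toReal ≤ r → μ B ≤ ENNReal.ofReal r := by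
    intro B r h
    rw [← ENNReal.ofReal_toReal (measure_ne_top μ B)]
    exact ENNReal.ofReal_le_ofReal h
  calc μ {ω | ¬ |∑ j ∈ F, e j ω| ≤ ε}
      ≤ μ {ω | ε ≤ (∑ i ∈ F, e i) ω} + μ {ω | (∑ i ∈ F, e i) ω ≤ -ε} :=
        (measure_mono hsub).trans (measure_union_le _ _)
    _ ≤ ENNReal.ofReal (Real.exp (-ε ^ 2 / (2 * m * c ^ 2)))
        + ENNReal.ofReal (Real.exp (-ε ^ 2 / (2 * m * c ^ 2))) :=
        add_le_add (hconv _ _ hup) (hconv _ _ hlo)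
    _ = ENNReal.ofReal (2 * Real.exp (-ε ^ 2 / (2 * F.card * c ^ 2))) := by
        rw [← ENNReal.ofReal_add (Real.exp_pos _).le (Real.exp_pos _).le, hm]
        ring_nf

lemma my_sum_pow_two (N : ℕ) : ∑ j ∈ Finset.range N, 2 ^ j = 2 ^ N - 1 := by
  induction N with
  | zero => simp
  | succ n ih => rw [Finset.sum_range_succ, ih, pow_succ]; omega

lemma my_count_sum (L : ℕ) :
    ∑ ℓ ∈ Finset.Icc (-1 : ℤ) (L : ℤ), 2 ^ (((L : ℤ) - ℓ).toNat) ≤ 4 * 2 ^ L := by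
  have h : ∑ ℓ ∈ Finset.Icc (-1 : ℤ) (L : ℤ), 2 ^ (((L : ℤ) - ℓ).toNat)
      = ∑ j ∈ Finset.range (L + 2), 2 ^ j := by
    refine Finset.sum_nbij' (fun ℓ => ((L : ℤ) - ℓ).toNat) (fun j => (L : ℤ) - j)
      ?_ ?_ ?_ ?_ ?_
    · intro ℓ hℓ
      simp only [Finset.mem_Icc] at hℓ
      simp only [Finset.mem_range]
      omega
    · intro j hj
      simp only [Finset.mem_range] at hj
      simp only [Finset.mem_Icc]
      omega
    · intro ℓ hℓ
      simp only [Finset.mem_Icc] at hℓ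
      omega
    · intro j hj
      simp only [Finset.mem_range] at hj
      omega
    · intro ℓ hℓ; rfl
  rw [h, my_sum_pow_two]
  have : (2:ℕ) ^ (L + 2) = 4 * 2 ^ L := by rw [pow_add]; ring
  omega

end Auxiliary


/-- Probability bound for the good event `A` of block-sum bounds on independent
bounded centered noise samples (Haar case). -/
theorem good_event_probability
    {Ω : Type*} [MeasureSpace Ω] [IsProbabilityMeasure (ℙ : Measure Ω)]
    (J n : ℕ) (hJ : 1 ≤ J) (hJpow : ∃ a : ℕ, J = 2 ^ a) (hn : n = 2 ^ J)
    (b : ℝ) (hb : 0 < b)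
    (e : ℕ → Ω → ℝ)
    (hmeas : ∀ i, Measurable (e i))
    (hindep : iIndepFun e ℙ)
    (hcentered : ∀ i, ∫ ω, e i ω ∂ℙ = 0)
    (hbound : ∀ i, ∀ᵐ ω ∂ℙ, |e i ω| ≤ b / 2)
    -- `mc ℓ` is the number of summands `J·2^{ℓ-1}` in a half-block at scale `ℓ`
    (mc : ℤ → ℕ) (hmc : ∀ ℓ : ℤ, -1 ≤ ℓ → (mc ℓ : ℝ) = (J : ℝ) * 2 ^ ((ℓ : ℝ) - 1))
    -- `s ℓ k` is the block start index `k·2^ℓ·J`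
    (s : ℤ → ℕ → ℕ) (hs : ∀ ℓ : ℤ, -1 ≤ ℓ → ∀ k : ℕ, (s ℓ k : ℝ) = (k : ℝ) * 2 ^ (ℓ : ℝ) * J) :
    ENNReal.ofReal (1 - 4 / Real.logb 2 n + 1 / n)
      ≤ ℙ {ω | ∀ ℓ : ℤ, -1 ≤ ℓ → ℓ ≤ (J : ℤ) - Nat.log 2 J →
            ∀ k : ℕ, (k : ℝ) < 2 ^ ((J : ℝ) - Nat.log 2 J - ℓ) →
              |∑ i ∈ Finset.range (mc ℓ), e (s ℓ k + i + 1) ω|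
                ≤ b * J * 2 ^ ((ℓ : ℝ) / 2) * Real.sqrt (Real.log 2 / 2)} := by
  obtain ⟨a, ha⟩ := hJpow
  have hlog : Nat.log 2 J = a := by rw [ha, Nat.log_pow (by norm_num)]
  have haJ : a ≤ J := by
    rw [ha]; exact (Nat.lt_two_pow_self).le
  set L : ℕ := J - a with hL
  have hJL : J * 2 ^ L = n := by
    rw [hn, ha, ← pow_add]; congr 1; omega
  -- J is divisible by 4, hence J ≥ 4
  have hJ4 : 4 ≤ J := by
    have h1 := hmc (-1) le_rfl
    have h2 : ((-1 : ℤ) : ℝ) - 1 = -2 := by norm_num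
    have h3 : (2 : ℝ) ^ (-2 : ℝ) = 1 / 4 := by
      rw [show (-2 : ℝ) = ((-2 : ℤ) : ℝ) by norm_num, Real.rpow_intCast]; norm_num
    rw [h2, h3] at h1
    have h4 : ((4 * mc (-1) : ℕ) : ℝ) = (J : ℝ) := by push_cast; rw [h1]; ring
    have h5 : 4 * mc (-1) = J := by exact_mod_cast h4
    have h6 : mc (-1) ≠ 0 := by rintro h; rw [h] at h5; omega
    omega
  have hJR : (0 : ℝ) < J := by exact_mod_cast hJ
  have hnpos : 0 < n := by rw [hn]; positivity
  have hnR : (0 : ℝ) < n := by exact_mod_cast hnpos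
  -- notation
  set εr : ℤ → ℝ := fun ℓ => b * J * 2 ^ ((ℓ : ℝ) / 2) * Real.sqrt (Real.log 2 / 2) with hεr
  set Bad : ℤ → ℕ → Set Ω := fun ℓ k =>
    {ω | ¬ |∑ i ∈ Finset.range (mc ℓ), e (s ℓ k + i + 1) ω| ≤ εr ℓ} with hBadDef
  set A : Set Ω := {ω | ∀ ℓ : ℤ, -1 ≤ ℓ → ℓ ≤ (J : ℤ) - Nat.log 2 J →
            ∀ k : ℕ, (k : ℝ) < 2 ^ ((J : ℝ) - Nat.log 2 J - ℓ) →
              |∑ i ∈ Finset.range (mc ℓ), e (s ℓ k + i + 1) ω| ≤ εr ℓ} with hA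
  have hεpos : ∀ ℓ : ℤ, 0 < εr ℓ := by
    intro ℓ
    have h1 : (0 : ℝ) < 2 ^ ((ℓ : ℝ) / 2) := Real.rpow_pos_of_pos two_pos _
    have h2 : (0 : ℝ) < Real.sqrt (Real.log 2 / 2) :=
      Real.sqrt_pos.mpr (by linarith [Real.log_pos one_lt_two])
    exact mul_pos (mul_pos (mul_pos hb hJR) h1) h2
  -- measurability of A
  have hAmeas : MeasurableSet A := by
    have : A = ⋂ (ℓ : ℤ), ⋂ (k : ℕ),
        {ω | (-1 ≤ ℓ ∧ ℓ ≤ (J : ℤ) - Nat.log 2 J ∧ (k : ℝ) < 2 ^ ((J : ℝ) - Nat.log 2 J - ℓ)) →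
          |∑ i ∈ Finset.range (mc ℓ), e (s ℓ k + i + 1) ω| ≤ εr ℓ} := by
      ext ω
      simp only [hA, Set.mem_setOf_eq, Set.mem_iInter]
      exact ⟨fun h ℓ k hc => h ℓ hc.1 hc.2.1 k hc.2.2, fun h ℓ h1 h2 k h3 => h ℓ k ⟨h1, h2, h3⟩⟩
    rw [this]
    refine MeasurableSet.iInter fun ℓ => MeasurableSet.iInter fun k => ?_
    by_cases h : (-1 ≤ ℓ ∧ ℓ ≤ (J : ℤ) - Nat.log 2 J ∧ (k : ℝ) < 2 ^ ((J : ℝ) - Nat.log 2 J - ℓ))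
    · have heq : {ω : Ω | (-1 ≤ ℓ ∧ ℓ ≤ (J : ℤ) - Nat.log 2 J ∧
          (k : ℝ) < 2 ^ ((J : ℝ) - Nat.log 2 J - ℓ)) →
          |∑ i ∈ Finset.range (mc ℓ), e (s ℓ k + i + 1) ω| ≤ εr ℓ}
          = {ω : Ω | |∑ i ∈ Finset.range (mc ℓ), e (s ℓ k + i + 1) ω| ≤ εr ℓ} := by
        ext ω; simp [h]
      rw [heq]
      exact measurableSet_le
        ((Finset.measurable_sum _ (fun i _ => hmeas _)).abs) measurable_const
    · have heq : {ω : Ω | (-1 ≤ ℓ ∧ ℓ ≤ (J : ℤ) - Nat.log 2 J ∧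
          (k : ℝ) < 2 ^ ((J : ℝ) - Nat.log 2 J - ℓ)) →
          |∑ i ∈ Finset.range (mc ℓ), e (s ℓ k + i + 1) ω| ≤ εr ℓ} = Set.univ := by
        ext ω; simp [h]
      rw [heq]
      exact MeasurableSet.univ
  -- per-block tail bound
  have hBad : ∀ ℓ : ℤ, -1 ≤ ℓ → ∀ k : ℕ,
      ℙ (Bad ℓ k) ≤ ENNReal.ofReal (2 * ((n : ℝ) ^ 2)⁻¹) := by
    intro ℓ hℓ k
    have hmcR := hmc ℓ hℓ
    set P : ℝ := (2 : ℝ) ^ (ℓ : ℝ) with hP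
    have hPpos : 0 < P := Real.rpow_pos_of_pos two_pos _
    have hP1 : (2 : ℝ) ^ ((ℓ : ℝ) - 1) = P / 2 := by
      rw [Real.rpow_sub two_pos, Real.rpow_one]
    have hP2 : (2 : ℝ) ^ ((ℓ : ℝ) / 2) * (2 : ℝ) ^ ((ℓ : ℝ) / 2) = P := by
      rw [← Real.rpow_add two_pos]; ring_nf; exact hP.symm
    have hmcpos : 0 < mc ℓ := by
      have : (0 : ℝ) < (mc ℓ : ℝ) := by rw [hmcR, hP1]; positivity
      exact_mod_cast this
    set F : Finset ℕ := Finset.Ico (s ℓ k + 1) (s ℓ k + 1 + mc ℓ) with hF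
    have hFcard : F.card = mc ℓ := by rw [hF, Nat.card_Ico]; omega
    have hsum : ∀ ω, ∑ j ∈ F, e j ω = ∑ i ∈ Finset.range (mc ℓ), e (s ℓ k + i + 1) ω := by
      intro ω
      rw [hF, Finset.sum_Ico_eq_sum_range]
      rw [show s ℓ k + 1 + mc ℓ - (s ℓ k + 1) = mc ℓ by omega]
      exact Finset.sum_congr rfl fun i _ => by rw [show s ℓ k + 1 + i = s ℓ k + i + 1 by omega]
    have hset : Bad ℓ k = {ω | ¬ |∑ j ∈ F, e j ω| ≤ εr ℓ} := by
      ext ω; simp only [hBadDef, Set.mem_setOf_eq, hsum]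
    rw [hset]
    refine (my_block_tail e hmeas hindep hcentered (half_pos hb) hbound F
      (by rw [hFcard]; exact hmcpos) (hεpos ℓ)).trans ?_
    apply ENNReal.ofReal_le_ofReal
    have hεsq : εr ℓ ^ 2 = b ^ 2 * (J : ℝ) ^ 2 * P * (Real.log 2 / 2) := by
      have hsq : Real.sqrt (Real.log 2 / 2) ^ 2 = Real.log 2 / 2 :=
        Real.sq_sqrt (by positivity)
      rw [hεr]
      simp only []
      rw [mul_pow, mul_pow, mul_pow, hsq, sq (((2:ℝ)) ^ ((ℓ : ℝ) / 2)), hP2]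
    have hexp_eq : -εr ℓ ^ 2 / (2 * (F.card : ℝ) * (b / 2) ^ 2)
        = -(2 * (J : ℝ) * Real.log 2) := by
      rw [hFcard, hmcR, hP1, hεsq]
      field_simp
    rw [hexp_eq]
    have hexp2 : Real.exp (-(2 * (J : ℝ) * Real.log 2)) = ((n : ℝ) ^ 2)⁻¹ := by
      rw [Real.exp_neg]
      congr 1
      rw [show (n : ℝ) ^ 2 = (2 : ℝ) ^ (2 * J) by
        rw [hn]; push_cast; rw [← pow_mul]; ring_nf]
      rw [show (2:ℝ) * (J:ℝ) * Real.log 2 = ((2 * J : ℕ) : ℝ) * Real.log 2 by push_cast; ring,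
        ← Real.log_pow, Real.exp_log (by positivity)]
    rw [hexp2]
  -- A-complement is included in the union of bad events
  have hsubset : Aᶜ ⊆ ⋃ ℓ ∈ Finset.Icc (-1 : ℤ) (L : ℤ),
      ⋃ k ∈ Finset.range (2 ^ (((L : ℤ) - ℓ).toNat)), Bad ℓ k := by
    intro ω hω
    simp only [hA, Set.mem_compl_iff, Set.mem_setOf_eq] at hω
    push_neg at hω
    obtain ⟨ℓ, hℓ1, hℓ2, k, hk, hQ⟩ := hω
    have hLZ : (J : ℤ) - Nat.log 2 J = (L : ℤ) := by rw [hlog]; omega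
    rw [hLZ] at hℓ2
    have hkn : k < 2 ^ (((L : ℤ) - ℓ).toNat) := by
      have hLr : (L : ℝ) = (J : ℝ) - a := by rw [hL]; exact Nat.cast_sub haJ
      have h1 : (J : ℝ) - Nat.log 2 J - ℓ = (((L : ℤ) - ℓ : ℤ) : ℝ) := by
        rw [hlog]; push_cast; rw [hLr]
      rw [h1, Real.rpow_intCast] at hk
      have h2 : ((L : ℤ) - ℓ) = (((L : ℤ) - ℓ).toNat : ℤ) := by omega
      rw [h2, zpow_natCast] at hk
      exact_mod_cast hk
    simp only [Set.mem_iUnion, Finset.mem_coe, Finset.mem_Icc, Finset.mem_range]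
    exact ⟨ℓ, ⟨hℓ1, hℓ2⟩, k, hkn, by
      simp only [hBadDef, Set.mem_setOf_eq, not_le]; exact hQ⟩
  -- union bound
  have hAc : ℙ Aᶜ ≤ ENNReal.ofReal (8 / ((J : ℝ) * n)) := by
    calc ℙ Aᶜ ≤ ℙ (⋃ ℓ ∈ Finset.Icc (-1 : ℤ) (L : ℤ),
          ⋃ k ∈ Finset.range (2 ^ (((L : ℤ) - ℓ).toNat)), Bad ℓ k) := measure_mono hsubset
      _ ≤ ∑ ℓ ∈ Finset.Icc (-1 : ℤ) (L : ℤ),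
          ℙ (⋃ k ∈ Finset.range (2 ^ (((L : ℤ) - ℓ).toNat)), Bad ℓ k) :=
        measure_biUnion_finset_le _ _
      _ ≤ ∑ ℓ ∈ Finset.Icc (-1 : ℤ) (L : ℤ),
          ∑ k ∈ Finset.range (2 ^ (((L : ℤ) - ℓ).toNat)), ℙ (Bad ℓ k) :=
        Finset.sum_le_sum fun ℓ _ => measure_biUnion_finset_le _ _
      _ ≤ ∑ ℓ ∈ Finset.Icc (-1 : ℤ) (L : ℤ),
          ∑ _k ∈ Finset.range (2 ^ (((L : ℤ) - ℓ).toNat)),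
            ENNReal.ofReal (2 * ((n : ℝ) ^ 2)⁻¹) := by
        refine Finset.sum_le_sum fun ℓ hℓ => Finset.sum_le_sum fun k _ => ?_
        exact hBad ℓ (Finset.mem_Icc.mp hℓ).1 k
      _ = ((∑ ℓ ∈ Finset.Icc (-1 : ℤ) (L : ℤ), 2 ^ (((L : ℤ) - ℓ).toNat) : ℕ) : ENNReal)
            * ENNReal.ofReal (2 * ((n : ℝ) ^ 2)⁻¹) := by
        rw [Nat.cast_sum, Finset.sum_mul]
        simp only [Finset.sum_const, Finset.card_range, nsmul_eq_mul]
      _ ≤ ((4 * 2 ^ L : ℕ) : ENNReal) * ENNReal.ofReal (2 * ((n : ℝ) ^ 2)⁻¹) := by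
        gcongr
        exact_mod_cast my_count_sum L
      _ = ENNReal.ofReal ((4 * 2 ^ L : ℕ) * (2 * ((n : ℝ) ^ 2)⁻¹)) := by
        rw [← ENNReal.ofReal_natCast, ← ENNReal.ofReal_mul (by positivity)]
      _ ≤ ENNReal.ofReal (8 / ((J : ℝ) * n)) := by
        apply ENNReal.ofReal_le_ofReal
        have h2L : (J : ℝ) * (2 : ℝ) ^ L = n := by exact_mod_cast hJL
        have hn2 : (n : ℝ) ^ 2 = (J : ℝ) * 2 ^ L * n := by rw [h2L]; ring
        push_cast
        apply le_of_eq
        rw [hn2]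
        field_simp
        ring
  -- final arithmetic
  have hlogb : Real.logb 2 (n : ℝ) = J := by
    rw [hn]; push_cast
    rw [← Real.rpow_natCast 2 J, Real.logb_rpow (by norm_num) (by norm_num)]
  have hJn : (J : ℝ) ≤ n := by
    have : J ≤ n := by rw [hn]; exact (Nat.lt_two_pow_self).le
    exact_mod_cast this
  have h16 : (16 : ℝ) ≤ n := by
    have : 16 ≤ n := by
      rw [hn]
      calc 16 = 2 ^ 4 := by norm_num
        _ ≤ 2 ^ J := Nat.pow_le_pow_right (by norm_num) hJ4
    exact_mod_cast this
  have hnonneg : 0 ≤ 1 - 4 / (J : ℝ) + 1 / n := by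
    have h1 : 4 / (J : ℝ) ≤ 1 := by
      rw [div_le_one hJR]; exact_mod_cast hJ4
    have h2 : 0 ≤ 1 / (n : ℝ) := by positivity
    linarith
  have hreal : 1 - 4 / (J : ℝ) + 1 / n + 8 / ((J : ℝ) * n) ≤ 1 := by
    have heq : (1 : ℝ) / n + 8 / ((J : ℝ) * n) = ((J : ℝ) + 8) / ((J : ℝ) * n) := by
      field_simp
    have hle : ((J : ℝ) + 8) / ((J : ℝ) * n) ≤ 4 / J := by
      rw [div_le_div_iff₀ (by positivity) hJR]
      nlinarith
    linarith
  have hkey : ENNReal.ofReal (1 - 4 / (J : ℝ) + 1 / n) + ℙ Aᶜ ≤ 1 := by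
    calc ENNReal.ofReal (1 - 4 / (J : ℝ) + 1 / n) + ℙ Aᶜ
        ≤ ENNReal.ofReal (1 - 4 / (J : ℝ) + 1 / n) + ENNReal.ofReal (8 / ((J : ℝ) * n)) :=
          add_le_add_right hAc _
      _ = ENNReal.ofReal (1 - 4 / (J : ℝ) + 1 / n + 8 / ((J : ℝ) * n)) :=
          (ENNReal.ofReal_add hnonneg (by positivity)).symm
      _ ≤ ENNReal.ofReal 1 := ENNReal.ofReal_le_ofReal hreal
      _ = 1 := ENNReal.ofReal_one
  have hsum1 : ℙ A + ℙ Aᶜ = 1 := by rw [measure_add_measure_compl hAmeas, measure_univ]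
  have hfinal : ENNReal.ofReal (1 - 4 / (J : ℝ) + 1 / n) ≤ ℙ A := by
    have := hkey.trans_eq hsum1.symm
    rwa [ENNReal.add_le_add_iff_right (measure_ne_top ℙ Aᶜ)] at this
  rw [hlogb]
  exact hfinal
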